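/- Gauge invariance of the Martel–Poisson variable h̃_rr: for all smooth functions ξ_t, ξ_r, ξ : D → ℝ, if the even-parity perturbation fields are pure gauge, i.e. h_rr = −2∂_r ξ_r − (2M/(r²f)) ξ_r, j_r = −∂_r ξ − ξ_r + (2/r) ξ, and G = −(2/r²) ξ, then the combination h̃_rr := h_rr − 2∂_r j_r − (2M/(r²f)) j_r + r² ∂_r² G + ((2r−3M)/f) ∂_r G vanishes identically on D. -/

import Mathlib

noncomputable section

/-- Partial derivative in the first (time) variable. -/
def ptd (u : ℝ → ℝ → ℝ) : ℝ → ℝ → ℝ := fun t r => deriv (fun s => u s r) t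

/-- Partial derivative in the second (radial) variable. -/
def prd (u : ℝ → ℝ → ℝ) : ℝ → ℝ → ℝ := fun t r => deriv (fun s => u t s) r

/-- The Schwarzschild lapse `f(r) = 1 - 2M/r`. -/
def fS (M r : ℝ) : ℝ := 1 - 2 * M / r

/-- `λ = l (l+1)`. -/
def lam (l : ℕ) : ℝ := (l : ℝ) * ((l : ℝ) + 1)

/-- `μ = (l-1) (l+2)`. -/
def muS (l : ℕ) : ℝ := ((l : ℝ) - 1) * ((l : ℝ) + 2)

/-- `Λ(r) = μ + 6M/r`. -/
def LamS (M : ℝ) (l : ℕ) (r : ℝ) : ℝ := muS l + 6 * M / r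

/-- The tortoise derivative `∂_{r*} u = f ∂_r u`. -/
def rstar (M : ℝ) (u : ℝ → ℝ → ℝ) : ℝ → ℝ → ℝ := fun t r => fS M r * prd u t r

/-- Smoothness on the Schwarzschild exterior domain `D = {(t,r) | r > 2M}`. -/
def smoothOn (M : ℝ) (u : ℝ → ℝ → ℝ) : Prop :=
  ContDiffOn ℝ (⊤ : ℕ∞) (fun p : ℝ × ℝ => u p.1 p.2) {p : ℝ × ℝ | 2 * M < p.2}

lemma slice_contDiffOn (M : ℝ) {u : ℝ → ℝ → ℝ} (h : smoothOn M u) (t : ℝ) :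
    ContDiffOn ℝ (⊤ : ℕ∞) (u t) (Set.Ioi (2*M)) :=
  h.comp ((contDiff_const.prodMk contDiff_id).contDiffOn) (fun _ hs => hs)

lemma derivAt' {g : ℝ → ℝ} {a r : ℝ} (h : ContDiffOn ℝ (⊤ : ℕ∞) g (Set.Ioi a))
    (hr : r ∈ Set.Ioi a) : HasDerivAt g (deriv g r) r :=
  ((h.differentiableOn (by simp)).differentiableAt (isOpen_Ioi.mem_nhds hr)).hasDerivAt

lemma derivCD' {g : ℝ → ℝ} {a : ℝ} (h : ContDiffOn ℝ (⊤ : ℕ∞) g (Set.Ioi a)) :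
    ContDiffOn ℝ (⊤ : ℕ∞) (deriv g) (Set.Ioi a) :=
  h.deriv_of_isOpen isOpen_Ioi (by simp)

/-- gauge invariance of the Martel–Poisson variable `h̃_rr`. -/
theorem gauge_invariance_hrr (M : ℝ) (hM : 0 < M) (l : ℕ) (hl : 2 ≤ l)
    (xit xir xi : ℝ → ℝ → ℝ)
    (hs_t : smoothOn M xit) (hs_r : smoothOn M xir) (hs : smoothOn M xi)
    (hrr jr G : ℝ → ℝ → ℝ)
    (h_hrr : ∀ t r : ℝ, 2 * M < r →
      hrr t r = -2 * prd xir t r - (2*M/(r^2 * fS M r)) * xir t r)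
    (h_jr : ∀ t r : ℝ, 2 * M < r → jr t r = -(prd xi t r) - xir t r + (2/r) * xi t r)
    (h_G : ∀ t r : ℝ, 2 * M < r → G t r = -(2/r^2) * xi t r) :
    ∀ t r : ℝ, 2 * M < r →
      hrr t r - 2 * prd jr t r - (2*M/(r^2 * fS M r)) * jr t r
        + r^2 * prd (prd G) t r + ((2*r - 3*M)/fS M r) * prd G t r = 0 := by
  intro t r hr
  have hX : ContDiffOn ℝ (⊤ : ℕ∞) (xi t) (Set.Ioi (2*M)) := slice_contDiffOn M hs t
  have hXr : ContDiffOn ℝ (⊤ : ℕ∞) (xir t) (Set.Ioi (2*M)) := slice_contDiffOn M hs_r t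
  have hX' : ContDiffOn ℝ (⊤ : ℕ∞) (deriv (xi t)) (Set.Ioi (2*M)) := derivCD' hX
  have hrpos : 0 < r := lt_trans (by positivity) hr
  have hr0 : r ≠ 0 := ne_of_gt hrpos
  have hfr : (1 : ℝ) - 2*M/r ≠ 0 := by
    have : 2*M/r < 1 := (div_lt_one hrpos).mpr hr
    linarith
  -- radial derivative of G on the exterior
  have hG1 : ∀ s ∈ Set.Ioi (2*M), prd G t s = 4/s^3 * xi t s - 2/s^2 * deriv (xi t) s := by
    intro s hsIoi
    have hs0 : s ≠ 0 := ne_of_gt (lt_trans (by positivity) hsIoi)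
    have hev : (fun s' => G t s') =ᶠ[nhds s] (fun s' => -(2/s'^2) * xi t s') := by
      filter_upwards [isOpen_Ioi.mem_nhds hsIoi] with y hy
      exact h_G t y hy
    have h1 : HasDerivAt (fun s' : ℝ => -(2/s'^2)) (4/s^3) s := by
      have h2 := ((hasDerivAt_pow 2 s).inv (pow_ne_zero 2 hs0)).const_mul (-2 : ℝ)
      convert h2 using 1
      · rfl
      · rfl
      · funext y; simp only [Pi.inv_apply]; ring
      · field_simp; ring
    have hd : HasDerivAt (fun s' : ℝ => -(2/s'^2) * xi t s')
        (4/s^3 * xi t s - 2/s^2 * deriv (xi t) s) s := by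
      have := h1.mul (derivAt' hX hsIoi)
      convert this using 1
      · rfl
      · rfl
      · rfl
      ring
    show deriv (fun s' => G t s') s = _
    rw [hev.deriv_eq, hd.deriv]
  -- second radial derivative of G at r
  have hev2 : (fun s => prd G t s) =ᶠ[nhds r]
      (fun s => 4/s^3 * xi t s - 2/s^2 * deriv (xi t) s) := by
    filter_upwards [isOpen_Ioi.mem_nhds hr] with y hy
    exact hG1 y hy
  have ha : HasDerivAt (fun s : ℝ => 4/s^3) (-12/r^4) r := by
    have h2 := ((hasDerivAt_pow 3 r).inv (pow_ne_zero 3 hr0)).const_mul (4 : ℝ)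
    convert h2 using 1
    · rfl
    · rfl
    · funext y; simp only [Pi.inv_apply]; ring
    push_cast
    field_simp
    ring
  have hb : HasDerivAt (fun s : ℝ => 2/s^2) (-4/r^3) r := by
    have h2 := ((hasDerivAt_pow 2 r).inv (pow_ne_zero 2 hr0)).const_mul (2 : ℝ)
    convert h2 using 1
    · rfl
    · rfl
    · funext y; simp only [Pi.inv_apply]; ring
    push_cast
    field_simp
    ring
  have hd2 : HasDerivAt (fun s : ℝ => 4/s^3 * xi t s - 2/s^2 * deriv (xi t) s)
      (-12/r^4 * xi t r + 4/r^3 * deriv (xi t) r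
        - (-4/r^3 * deriv (xi t) r + 2/r^2 * deriv (deriv (xi t)) r)) r :=
    (ha.mul (derivAt' hX hr)).sub (hb.mul (derivAt' hX' hr))
  have e2 : prd (prd G) t r = -12/r^4 * xi t r + 4/r^3 * deriv (xi t) r
      - (-4/r^3 * deriv (xi t) r + 2/r^2 * deriv (deriv (xi t)) r) := by
    show deriv (fun s => prd G t s) r = _
    rw [hev2.deriv_eq, hd2.deriv]
  -- radial derivative of jr at r
  have hev3 : (fun s => jr t s) =ᶠ[nhds r]
      (fun s => -(deriv (xi t) s) - xir t s + 2/s * xi t s) := by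
    filter_upwards [isOpen_Ioi.mem_nhds hr] with y hy
    exact h_jr t y hy
  have hc : HasDerivAt (fun s : ℝ => 2/s) (-2/r^2) r := by
    have h2 := (hasDerivAt_inv hr0).const_mul (2 : ℝ)
    convert h2 using 1
    · rfl
    · rfl
    field_simp
    field_simp
  have hd3 : HasDerivAt (fun s : ℝ => -(deriv (xi t) s) - xir t s + 2/s * xi t s)
      (-(deriv (deriv (xi t)) r) - deriv (xir t) r
        + (-2/r^2 * xi t r + 2/r * deriv (xi t) r)) r :=
    ((derivAt' hX' hr).neg.sub (derivAt' hXr hr)).add (hc.mul (derivAt' hX hr))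
  have e3 : prd jr t r = -(deriv (deriv (xi t)) r) - deriv (xir t) r
      + (-2/r^2 * xi t r + 2/r * deriv (xi t) r) := by
    show deriv (fun s => jr t s) r = _
    rw [hev3.deriv_eq, hd3.deriv]
  have e0 : prd xir t r = deriv (xir t) r := rfl
  have e00 : prd xi t r = deriv (xi t) r := rfl
  rw [h_hrr t r hr, h_jr t r hr, e3, e2, hG1 r hr, e0, e00]
  have hr2M : r - 2*M ≠ 0 := sub_ne_zero.mpr (ne_of_gt hr)
  have hfs : fS M r = (r - 2*M)/r := by
    simp only [fS]; field_simp
  rw [hfs]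
  field_simp
  ring
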